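/- Let {p_θ : θ ∈ Θ ⊆ ℝ^k} be a smooth parametric family of strictly positive probability densities on ℝ^d with data score s_θ(x) = ∇_x log p_θ(x), and let γ ≥ 0. Assume each component vector field x ↦ ∇_{θ_j} s_θ(x) is smooth and decays so that integration by parts holds without boundary terms. Then the γ-score matching estimating function U_γ(θ, x) = p_θ(x)^γ ((γ+1)⟨s_θ(x), ∇_θ s_θ(x)⟩ + ∇_x·∇_θ s_θ(x)) is unbiased at the true parameter: E_{X∼p_θ}[U_γ(θ, X)] = 0 ∈ ℝ^k. -/

import Mathlib

open MeasureTheory Real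
open scoped RealInnerProductSpace

/-- Divergence (in `x`) of a vector field on `ℝ^d`. -/
noncomputable def divg {d : ℕ} (f : EuclideanSpace ℝ (Fin d) → EuclideanSpace ℝ (Fin d))
    (x : EuclideanSpace ℝ (Fin d)) : ℝ :=
  ∑ i, fderiv ℝ f x (EuclideanSpace.single i 1) i

/-- Data score `s_θ(x) = ∇_x log p_θ(x)`. -/
noncomputable def dataScore {k d : ℕ}
    (p : EuclideanSpace ℝ (Fin k) → EuclideanSpace ℝ (Fin d) → ℝ)
    (θ : EuclideanSpace ℝ (Fin k)) (x : EuclideanSpace ℝ (Fin d)) :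
    EuclideanSpace ℝ (Fin d) :=
  gradient (fun y => Real.log (p θ y)) x

/-- `∇_{θ_j} s_θ(x)`, the `j`-th parameter-derivative of the data score. -/
noncomputable def dThetaScore {k d : ℕ}
    (p : EuclideanSpace ℝ (Fin k) → EuclideanSpace ℝ (Fin d) → ℝ)
    (θ : EuclideanSpace ℝ (Fin k)) (x : EuclideanSpace ℝ (Fin d)) (j : Fin k) :
    EuclideanSpace ℝ (Fin d) :=
  fderiv ℝ (fun t => dataScore p t x) θ (EuclideanSpace.single j 1)

/-- `j`-th component of the `γ`-score matching estimating function
`U_γ(θ,x) = p_θ(x)^γ ((γ+1)⟨s_θ, ∇_θ s_θ⟩ + ∇_x·∇_θ s_θ)`. -/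
noncomputable def Ugamma {k d : ℕ} (γ : ℝ)
    (p : EuclideanSpace ℝ (Fin k) → EuclideanSpace ℝ (Fin d) → ℝ)
    (θ : EuclideanSpace ℝ (Fin k)) (x : EuclideanSpace ℝ (Fin d)) (j : Fin k) : ℝ :=
  p θ x ^ γ * ((γ + 1) * ⟪dataScore p θ x, dThetaScore p θ x j⟫
    + divg (fun y => dThetaScore p θ y j) x)

/-- Decomposition of a Euclidean vector into coordinates. -/
lemma euclid_decomp {d : ℕ} (v : EuclideanSpace ℝ (Fin d)) :
    (∑ i, v i • EuclideanSpace.single i (1:ℝ)) = v := by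
  ext j
  rw [show ((∑ i, v i • EuclideanSpace.single i (1:ℝ)) j)
      = ∑ i, (v i • EuclideanSpace.single i (1:ℝ)) j from by rw [WithLp.ofLp_sum, Finset.sum_apply]]
  simp [EuclideanSpace.single_apply]

lemma sum_clm_single_mul {d : ℕ} (L : EuclideanSpace ℝ (Fin d) →L[ℝ] ℝ)
    (v : EuclideanSpace ℝ (Fin d)) :
    ∑ i, L (EuclideanSpace.single i 1) * v i = L v := by
  conv_rhs => rw [← euclid_decomp v]
  rw [map_sum]
  refine Finset.sum_congr rfl fun i _ => ?_
  rw [L.map_smul, smul_eq_mul, mul_comm]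

lemma inner_gradient_eq {d : ℕ} (g : EuclideanSpace ℝ (Fin d) → ℝ)
    (x v : EuclideanSpace ℝ (Fin d)) :
    ⟪gradient g x, v⟫ = fderiv ℝ g x v := by
  rw [gradient]
  exact InnerProductSpace.toDual_symm_apply

/-- the `γ`-score matching estimating function is unbiased at the true
parameter: `E_{X∼p_θ}[U_γ(θ,X)] = 0`.  The decay assumption on each component vector
field `x ↦ ∇_{θ_j} s_θ(x)` is expressed as the vanishing of the boundary term in
integration by parts: `∫ div(p_θ^{γ+1} ∇_{θ_j} s_θ) = 0`. -/
theorem gamma_score_matching_unbiased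
    (k d : ℕ) (p : EuclideanSpace ℝ (Fin k) → EuclideanSpace ℝ (Fin d) → ℝ)
    (hp_smooth : ContDiff ℝ (⊤ : ℕ∞) (fun z : EuclideanSpace ℝ (Fin k) × EuclideanSpace ℝ (Fin d) =>
      p z.1 z.2))
    (hp_pos : ∀ θ x, 0 < p θ x) (hp_prob : ∀ θ, ∫ x, p θ x = 1)
    (γ : ℝ) (hγ : 0 ≤ γ) (θ : EuclideanSpace ℝ (Fin k))
    (hsmooth_field : ∀ j, ContDiff ℝ (⊤ : ℕ∞) (fun x => dThetaScore p θ x j))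
    (hIBP : ∀ j, ∫ x, divg (fun y => p θ y ^ (γ + 1) • dThetaScore p θ y j) x = 0) :
    ∀ j, ∫ x, p θ x * Ugamma γ p θ x j = 0 := by
  intro j
  have hq : Differentiable ℝ (fun x => p θ x) := by
    have : ContDiff ℝ (⊤ : ℕ∞) (fun x : EuclideanSpace ℝ (Fin d) => p θ x) :=
      by have h := hp_smooth.comp (ContDiff.prodMk (contDiff_const (c := θ)) contDiff_id); exact h
    exact this.differentiable (by simp)
  have hf : Differentiable ℝ (fun x => dThetaScore p θ x j) :=
    (hsmooth_field j).differentiable (by simp)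
  have key : ∀ x, p θ x * Ugamma γ p θ x j
      = divg (fun y => p θ y ^ (γ + 1) • dThetaScore p θ y j) x := by
    intro x
    set f : EuclideanSpace ℝ (Fin d) → EuclideanSpace ℝ (Fin d) :=
      fun y => dThetaScore p θ y j with hfdef
    have hPne : p θ x ≠ 0 := (hp_pos θ x).ne'
    have hqx : HasFDerivAt (fun y => p θ y) (fderiv ℝ (fun y => p θ y) x) x :=
      (hq x).hasFDerivAt
    set Dp : EuclideanSpace ℝ (Fin d) →L[ℝ] ℝ := fderiv ℝ (fun y => p θ y) x with hDpdef
    have hc : HasFDerivAt (fun y => p θ y ^ (γ + 1))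
        (((γ + 1) * p θ x ^ (γ + 1 - 1)) • Dp) x :=
      hqx.rpow_const (Or.inl hPne)
    have hfx : HasFDerivAt f (fderiv ℝ f x) x := (hf x).hasFDerivAt
    have hDg : fderiv ℝ (fun y => p θ y ^ (γ + 1) • f y) x
        = (p θ x ^ (γ + 1)) • fderiv ℝ f x
          + (((γ + 1) * p θ x ^ (γ + 1 - 1)) • Dp).smulRight (f x) :=
      (hc.smul hfx).fderiv
    -- score inner product
    have hlog : HasFDerivAt (fun y => Real.log (p θ y)) ((p θ x)⁻¹ • Dp) x :=
      (Real.hasDerivAt_log hPne).comp_hasFDerivAt x hqx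
    have hinner : ⟪dataScore p θ x, f x⟫ = (p θ x)⁻¹ * Dp (f x) := by
      rw [dataScore, inner_gradient_eq, hlog.fderiv]
      simp
    -- compute divergence of p^{γ+1} • f
    have hdivg : divg (fun y => p θ y ^ (γ + 1) • f y) x
        = p θ x ^ (γ + 1) * divg f x + ((γ + 1) * p θ x ^ (γ + 1 - 1)) * Dp (f x) := by
      rw [divg]
      simp only [hDg, ContinuousLinearMap.add_apply, ContinuousLinearMap.coe_smul',
        Pi.smul_apply, ContinuousLinearMap.smulRight_apply, PiLp.add_apply,
        PiLp.smul_apply, smul_eq_mul]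
      rw [Finset.sum_add_distrib, ← Finset.mul_sum, ← divg]
      congr 1
      rw [show (∑ i, (γ + 1) * p θ x ^ (γ + 1 - 1) * Dp (EuclideanSpace.single i 1) * f x i)
          = ((γ + 1) * p θ x ^ (γ + 1 - 1)) * ∑ i, Dp (EuclideanSpace.single i 1) * f x i by
        rw [Finset.mul_sum]; exact Finset.sum_congr rfl fun i _ => by ring]
      rw [sum_clm_single_mul]
    rw [hdivg, Ugamma, hinner]
    have h1 : p θ x ^ (γ + 1) = p θ x ^ γ * p θ x := Real.rpow_add_one hPne γ
    have h2 : γ + 1 - 1 = γ := by ring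
    rw [h2, h1]
    field_simp
    ring
  simp only [key]
  exact hIBP j
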